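/- arXiv:2011.00501 — 2 statements merged into one kernel-verified Lean document; each statement's English description precedes it below -/
import Mathlib

section
/- Let B be an R-bilinear antisymmetric biderivation of D with values in I(P,R). Then: (a) for all x ≤ y < z < u in P, B(e_{xy}, e_{yz})(x,z) = B(e_{xy}, e_{yu})(x,u); (b) for all x < y < z ≤ u in P, B(e_{yz}, e_{zu})(y,u) = B(e_{xz}, e_{zu})(x,u). -/
/-- The element `e_{xy}` of the incidence algebra: value `1` at `(x, y)` and `0` elsewhere. -/
def esingle (R : Type*) {P : Type*} [CommRing R] [PartialOrder P] [DecidableEq P]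
    {x y : P} (_h : x ≤ y) : IncidenceAlgebra R P :=
  ⟨fun u v => if u = x ∧ v = y then 1 else 0, fun u v huv => by
    split_ifs with h'
    · obtain ⟨rfl, rfl⟩ := h'
      exact absurd _h huv
    · rfl⟩

/-- `D`: the `R`-span of the elements `e_{xy}`, `x ≤ y`, i.e. the finitely supported elements of
the incidence algebra. -/
def Dspan (R P : Type*) [CommRing R] [PartialOrder P] [DecidableEq P] :
    Submodule R (IncidenceAlgebra R P) :=
  Submodule.span R {f : IncidenceAlgebra R P | ∃ (x y : P) (h : x ≤ y), f = esingle R h}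

/-!
Both relations come from expanding `B` along a factorisation `e_{yu} = e_{yz} e_{zu}` (resp.
`e_{xz} = e_{xy} e_{yz}`) by the Leibniz rule and evaluating at the corner entry: one term is the
left-hand side, the other vanishes unless two of the points coincide. In that degenerate case
the surviving term is `B(e_x, f)` or `B(f, e_x)` evaluated away from `x`, and this is `0` because
the Leibniz rule applied to the idempotent `e_x = e_x e_x` gives `φ = φ e_x + e_x φ`.
-/

section Esingle

variable {R P : Type*} [CommRing R] [PartialOrder P] [DecidableEq P]

lemma esingle_apply {x y : P} (h : x ≤ y) (a b : P) :
    esingle R h a b = if a = x ∧ b = y then 1 else 0 := rfl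

lemma esingle_mem_Dspan {x y : P} (h : x ≤ y) : esingle R h ∈ Dspan R P :=
  Submodule.subset_span ⟨x, y, h, rfl⟩

variable [LocallyFiniteOrder P]

lemma mul_esingle_apply (f : IncidenceAlgebra R P) {z u : P} (h : z ≤ u) (a b : P) :
    (f * esingle R h) a b = if b = u ∧ z ∈ Finset.Icc a b then f a z else 0 := by
  rw [IncidenceAlgebra.mul_apply]
  have hterm : ∀ t ∈ Finset.Icc a b,
      f a t * esingle R h t b = if t = z then (if b = u then f a z else 0) else 0 := by
    intro t _
    by_cases htz : t = z <;> by_cases hb : b = u <;> simp [esingle_apply, htz, hb]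
  rw [Finset.sum_congr rfl hterm, Finset.sum_ite_eq']
  split_ifs <;> simp_all

lemma esingle_mul_apply (f : IncidenceAlgebra R P) {x y : P} (h : x ≤ y) (a b : P) :
    (esingle R h * f) a b = if a = x ∧ y ∈ Finset.Icc a b then f y b else 0 := by
  rw [IncidenceAlgebra.mul_apply]
  have hterm : ∀ t ∈ Finset.Icc a b,
      esingle R h a t * f t b = if t = y then (if a = x then f y b else 0) else 0 := by
    intro t _
    by_cases hty : t = y <;> by_cases ha : a = x <;> simp [esingle_apply, hty, ha]
  rw [Finset.sum_congr rfl hterm, Finset.sum_ite_eq']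
  split_ifs <;> simp_all

lemma mul_esingle_apply_of_ne (f : IncidenceAlgebra R P) {z u : P} (h : z ≤ u) {a b : P}
    (hb : b ≠ u) : (f * esingle R h) a b = 0 := by
  rw [mul_esingle_apply, if_neg fun hc => hb hc.1]

lemma esingle_mul_apply_of_ne (f : IncidenceAlgebra R P) {x y : P} (h : x ≤ y) {a b : P}
    (ha : a ≠ x) : (esingle R h * f) a b = 0 := by
  rw [esingle_mul_apply, if_neg fun hc => ha hc.1]

lemma mul_esingle_apply_right (f : IncidenceAlgebra R P) {z u : P} (h : z ≤ u) {a : P}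
    (ha : a ≤ z) : (f * esingle R h) a u = f a z := by
  rw [mul_esingle_apply, if_pos ⟨rfl, Finset.mem_Icc.2 ⟨ha, h⟩⟩]

lemma esingle_mul_apply_left (f : IncidenceAlgebra R P) {x y : P} (h : x ≤ y) {b : P}
    (hb : y ≤ b) : (esingle R h * f) x b = f y b := by
  rw [esingle_mul_apply, if_pos ⟨rfl, Finset.mem_Icc.2 ⟨h, hb⟩⟩]

lemma esingle_mul_esingle {x y z : P} (hxy : x ≤ y) (hyz : y ≤ z) :
    esingle R hxy * esingle R hyz = esingle R (hxy.trans hyz) := by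
  ext a b _
  rw [esingle_mul_apply, esingle_apply, esingle_apply]
  by_cases ha : a = x <;> by_cases hb : b = z
  · subst ha hb
    simp [hxy, hyz]
  all_goals simp [ha, hb]

lemma apply_eq_zero_of_eq_mul_esingle_add_esingle_mul {x : P} {φ : IncidenceAlgebra R P}
    (hφ : φ = φ * esingle R (le_refl x) + esingle R (le_refl x) * φ) {a b : P} (ha : a ≠ x)
    (hb : b ≠ x) : φ a b = 0 := by
  rw [hφ, IncidenceAlgebra.add_apply, mul_esingle_apply_of_ne _ _ hb,
    esingle_mul_apply_of_ne _ _ ha, add_zero]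

end Esingle

section Biderivation

variable {R P : Type*} [CommRing R] [PartialOrder P] [LocallyFiniteOrder P] [DecidableEq P]
  {B : IncidenceAlgebra R P → IncidenceAlgebra R P → IncidenceAlgebra R P}

lemma biderivation_esingle_refl_left_apply
    (hder_l : ∀ f g h, f ∈ Dspan R P → g ∈ Dspan R P → h ∈ Dspan R P →
      B (f * g) h = B f h * g + f * B g h)
    {x : P} {f : IncidenceAlgebra R P} (hf : f ∈ Dspan R P) {a b : P} (ha : a ≠ x)
    (hb : b ≠ x) : B (esingle R (le_refl x)) f a b = 0 := by
  refine apply_eq_zero_of_eq_mul_esingle_add_esingle_mul ?_ ha hb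
  have h := hder_l _ _ f (esingle_mem_Dspan (le_refl x)) (esingle_mem_Dspan (le_refl x)) hf
  rwa [esingle_mul_esingle] at h

lemma biderivation_esingle_refl_right_apply
    (hder_r : ∀ f g h, f ∈ Dspan R P → g ∈ Dspan R P → h ∈ Dspan R P →
      B f (g * h) = B f g * h + g * B f h)
    {x : P} {f : IncidenceAlgebra R P} (hf : f ∈ Dspan R P) {a b : P} (ha : a ≠ x)
    (hb : b ≠ x) : B f (esingle R (le_refl x)) a b = 0 := by
  refine apply_eq_zero_of_eq_mul_esingle_add_esingle_mul ?_ ha hb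
  have h := hder_r f _ _ hf (esingle_mem_Dspan (le_refl x)) (esingle_mem_Dspan (le_refl x))
  rwa [esingle_mul_esingle] at h

variable
  (hder_l : ∀ f g h, f ∈ Dspan R P → g ∈ Dspan R P → h ∈ Dspan R P →
    B (f * g) h = B f h * g + f * B g h)
  (hder_r : ∀ f g h, f ∈ Dspan R P → g ∈ Dspan R P → h ∈ Dspan R P →
    B f (g * h) = B f g * h + g * B f h)
include hder_l hder_r

lemma biderivation_esingle_apply_eq_of_le_of_lt_of_lt {x y z u : P} (hxy : x ≤ y) (hyz : y < z)
    (hzu : z < u) :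
    B (esingle R hxy) (esingle R hyz.le) x z =
      B (esingle R hxy) (esingle R (hyz.trans hzu).le) x u := by
  have hexpand := hder_r (esingle R hxy) (esingle R hyz.le) (esingle R hzu.le)
    (esingle_mem_Dspan _) (esingle_mem_Dspan _) (esingle_mem_Dspan _)
  rw [esingle_mul_esingle] at hexpand
  rw [hexpand, IncidenceAlgebra.add_apply, mul_esingle_apply_right _ _ (hxy.trans hyz.le)]
  rcases hxy.lt_or_eq with hxy | rfl
  · rw [esingle_mul_apply_of_ne _ _ hxy.ne, add_zero]
  · rw [esingle_mul_apply_left _ _ hzu.le,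
      biderivation_esingle_refl_left_apply hder_l (esingle_mem_Dspan _) hyz.ne'
        (hyz.trans hzu).ne', add_zero]

lemma biderivation_esingle_apply_eq_of_lt_of_lt_of_le {x y z u : P} (hxy : x < y) (hyz : y < z)
    (hzu : z ≤ u) :
    B (esingle R hyz.le) (esingle R hzu) y u =
      B (esingle R (hxy.trans hyz).le) (esingle R hzu) x u := by
  have hexpand := hder_l (esingle R hxy.le) (esingle R hyz.le) (esingle R hzu)
    (esingle_mem_Dspan _) (esingle_mem_Dspan _) (esingle_mem_Dspan _)
  rw [esingle_mul_esingle] at hexpand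
  rw [hexpand, IncidenceAlgebra.add_apply, esingle_mul_apply_left _ _ (hyz.le.trans hzu)]
  rcases hzu.lt_or_eq with hzu | rfl
  · rw [mul_esingle_apply_of_ne _ _ hzu.ne', zero_add]
  · rw [mul_esingle_apply_right _ _ hxy.le,
      biderivation_esingle_refl_right_apply hder_r (esingle_mem_Dspan _) (hxy.trans hyz).ne
        hyz.ne, zero_add]

end Biderivation

theorem bider_esingle_relations'_general
    {R P : Type*} [CommRing R] [PartialOrder P] [LocallyFiniteOrder P] [DecidableEq P]
    (B : IncidenceAlgebra R P → IncidenceAlgebra R P → IncidenceAlgebra R P)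
    (hder_l : ∀ f g h, f ∈ Dspan R P → g ∈ Dspan R P → h ∈ Dspan R P →
      B (f * g) h = B f h * g + f * B g h)
    (hder_r : ∀ f g h, f ∈ Dspan R P → g ∈ Dspan R P → h ∈ Dspan R P →
      B f (g * h) = B f g * h + g * B f h)
    :
    (∀ (x y z u : P) (hxy : x ≤ y) (hyz : y < z) (hzu : z < u),
      (B (esingle R hxy) (esingle R hyz.le)) x z =
        (B (esingle R hxy) (esingle R (hyz.trans hzu).le)) x u) ∧
    (∀ (x y z u : P) (hxy : x < y) (hyz : y < z) (hzu : z ≤ u),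
      (B (esingle R hyz.le) (esingle R hzu)) y u =
        (B (esingle R (hxy.trans hyz).le) (esingle R hzu)) x u) :=
  ⟨fun _ _ _ _ hxy hyz hzu =>
      biderivation_esingle_apply_eq_of_le_of_lt_of_lt hder_l hder_r hxy hyz hzu,
    fun _ _ _ _ hxy hyz hzu =>
      biderivation_esingle_apply_eq_of_lt_of_lt_of_le hder_l hder_r hxy hyz hzu⟩

/-- For an `R`-bilinear antisymmetric biderivation `B` of `D` with values in
`I(P,R)`: (a) for `x ≤ y < z < u`, `B(e_{xy}, e_{yz})(x,z) = B(e_{xy}, e_{yu})(x,u)`; and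
(b) for `x < y < z ≤ u`, `B(e_{yz}, e_{zu})(y,u) = B(e_{xz}, e_{zu})(x,u)`. -/
theorem bider_esingle_relations'
    {R P : Type*} [CommRing R] [PartialOrder P] [LocallyFiniteOrder P] [DecidableEq P]
    (B : IncidenceAlgebra R P → IncidenceAlgebra R P → IncidenceAlgebra R P)
    (hadd_l : ∀ f g h, f ∈ Dspan R P → g ∈ Dspan R P → h ∈ Dspan R P →
      B (f + g) h = B f h + B g h)
    (hadd_r : ∀ f g h, f ∈ Dspan R P → g ∈ Dspan R P → h ∈ Dspan R P →
      B f (g + h) = B f g + B f h)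
    (hsmul_l : ∀ (r : R) (f h), f ∈ Dspan R P → h ∈ Dspan R P → B (r • f) h = r • B f h)
    (hsmul_r : ∀ (r : R) (f h), f ∈ Dspan R P → h ∈ Dspan R P → B f (r • h) = r • B f h)
    (hder_l : ∀ f g h, f ∈ Dspan R P → g ∈ Dspan R P → h ∈ Dspan R P →
      B (f * g) h = B f h * g + f * B g h)
    (hder_r : ∀ f g h, f ∈ Dspan R P → g ∈ Dspan R P → h ∈ Dspan R P →
      B f (g * h) = B f g * h + g * B f h)
    (hanti : ∀ f, f ∈ Dspan R P → B f f = 0)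
    :
    (∀ (x y z u : P) (hxy : x ≤ y) (hyz : y < z) (hzu : z < u),
      (B (esingle R hxy) (esingle R hyz.le)) x z =
        (B (esingle R hxy) (esingle R (hyz.trans hzu).le)) x u) ∧
    (∀ (x y z u : P) (hxy : x < y) (hyz : y < z) (hzu : z ≤ u),
      (B (esingle R hyz.le) (esingle R hzu)) y u =
        (B (esingle R (hxy.trans hyz).le) (esingle R hzu)) x u) :=
  bider_esingle_relations'_general B hder_l hder_r
end

section
/- Let n be a positive natural number and let P = Fin n with its usual linear order, so that I(P,R) is isomorphic to the algebra T_n(R) of upper triangular n × n matrices over R. Then every Poisson structure {,} on I(P,R) is standard: there exists r ∈ R such that {f,g} = r·[f,g] for all f, g ∈ I(P,R). -/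
open Finset

namespace PoissonFinChainAux

variable {R : Type*} [CommRing R] {n : ℕ}

/-- The "matrix unit" element of the incidence algebra of `Fin n`. -/
def sgl (i j : Fin n) : IncidenceAlgebra R (Fin n) :=
  ⟨fun a b => if a = i ∧ b = j ∧ i ≤ j then 1 else 0, by
    intro a b hab
    split_ifs with h
    · obtain ⟨rfl, rfl, hij⟩ := h
      exact absurd hij hab
    · rfl⟩

lemma sgl_apply (i j a b : Fin n) :
    (sgl i j : IncidenceAlgebra R (Fin n)) a b = if a = i ∧ b = j ∧ i ≤ j then 1 else 0 := rfl

lemma sgl_of_not_le {i j : Fin n} (h : ¬ i ≤ j) : (sgl i j : IncidenceAlgebra R (Fin n)) = 0 := by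
  ext a b _
  simp [sgl_apply, h]

lemma sum_apply {ι : Type} (s : Finset ι) (F : ι → IncidenceAlgebra R (Fin n)) (a b : Fin n) :
    (∑ i ∈ s, F i) a b = ∑ i ∈ s, F i a b := by
  induction s using Finset.cons_induction with
  | empty => simp [IncidenceAlgebra.zero_apply]
  | cons i s hi ih => rw [Finset.sum_cons, Finset.sum_cons, IncidenceAlgebra.add_apply, ih]

lemma sum_sgl (f : IncidenceAlgebra R (Fin n)) :
    f = ∑ p : Fin n × Fin n, f p.1 p.2 • sgl p.1 p.2 := by
  ext a b hab
  rw [sum_apply]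
  rw [Finset.sum_eq_single_of_mem (a, b) (Finset.mem_univ _)]
  · simp [IncidenceAlgebra.constSMul_apply, sgl_apply, hab]
  · intro p _ hp
    rw [IncidenceAlgebra.constSMul_apply, sgl_apply, if_neg, smul_zero]
    rintro ⟨h1, h2, -⟩
    exact hp (Prod.ext h1.symm h2.symm)

lemma sgl_mul_sgl_eq {i j l : Fin n} (hij : i ≤ j) (hjl : j ≤ l) :
    (sgl i j : IncidenceAlgebra R (Fin n)) * sgl j l = sgl i l := by
  ext a b hab
  rw [IncidenceAlgebra.mul_apply]
  rcases eq_or_ne a i with rfl | hai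
  · rcases eq_or_ne b l with rfl | hbl
    · rw [Finset.sum_eq_single_of_mem j (by simp [Finset.mem_Icc, hij, hjl])]
      · simp [sgl_apply, hij, hjl, hij.trans hjl]
      · intro x _ hx
        simp [sgl_apply, hx]
    · rw [Finset.sum_eq_zero, sgl_apply, if_neg (by tauto)]
      intro x _
      simp [sgl_apply, hbl]
  · rw [Finset.sum_eq_zero, sgl_apply, if_neg (by tauto)]
    intro x _
    simp [sgl_apply, hai]

lemma sgl_mul_sgl_ne {i j k l : Fin n} (hjk : j ≠ k) :
    (sgl i j : IncidenceAlgebra R (Fin n)) * sgl k l = 0 := by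
  ext a b hab
  rw [IncidenceAlgebra.mul_apply, IncidenceAlgebra.zero_apply]
  apply Finset.sum_eq_zero
  intro x _
  rcases eq_or_ne x j with rfl | hxj
  · rw [sgl_apply k l, if_neg (by tauto), mul_zero]
  · rw [sgl_apply i j, if_neg (by tauto), zero_mul]

lemma diag_mul_apply (k : Fin n) (f : IncidenceAlgebra R (Fin n)) (a b : Fin n) :
    ((sgl k k : IncidenceAlgebra R (Fin n)) * f) a b = if a = k then f a b else 0 := by
  rw [IncidenceAlgebra.mul_apply]
  rcases eq_or_ne a k with rfl | hak
  · rcases le_or_gt a b with hab | hab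
    · rw [Finset.sum_eq_single_of_mem a (by simp [Finset.mem_Icc, hab])]
      · simp [sgl_apply]
      · intro x _ hx
        rw [sgl_apply, if_neg (by tauto), zero_mul]
    · rw [Finset.Icc_eq_empty (not_le_of_gt hab), Finset.sum_empty, if_pos rfl,
        IncidenceAlgebra.apply_eq_zero_of_not_le (not_le_of_gt hab)]
  · rw [Finset.sum_eq_zero, if_neg hak]
    intro x _
    rw [sgl_apply, if_neg (by tauto), zero_mul]

lemma mul_diag_apply (k : Fin n) (f : IncidenceAlgebra R (Fin n)) (a b : Fin n) :
    (f * (sgl k k : IncidenceAlgebra R (Fin n))) a b = if b = k then f a b else 0 := by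
  rw [IncidenceAlgebra.mul_apply]
  rcases eq_or_ne b k with rfl | hbk
  · rcases le_or_gt a b with hab | hab
    · rw [Finset.sum_eq_single_of_mem b (by simp [Finset.mem_Icc, hab])]
      · simp [sgl_apply]
      · intro x _ hx
        rw [sgl_apply, if_neg (by tauto), mul_zero]
    · rw [Finset.Icc_eq_empty (not_le_of_gt hab), Finset.sum_empty, if_pos rfl,
        IncidenceAlgebra.apply_eq_zero_of_not_le (not_le_of_gt hab)]
  · rw [Finset.sum_eq_zero, if_neg hbk]
    intro x _
    rw [sgl_apply, if_neg (by tauto), mul_zero]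

lemma one_eq_sum_diag : (1 : IncidenceAlgebra R (Fin n)) = ∑ k, sgl k k := by
  ext a b hab
  rw [sum_apply, IncidenceAlgebra.one_apply]
  rcases eq_or_ne a b with rfl | hab'
  · rw [Finset.sum_eq_single_of_mem a (Finset.mem_univ _)]
    · simp [sgl_apply]
    · intro x _ hx
      rw [sgl_apply, if_neg (by tauto)]
  · rw [if_neg hab', Finset.sum_eq_zero]
    intro x _
    rw [sgl_apply, if_neg]
    rintro ⟨rfl, rfl, -⟩
    exact hab' rfl

lemma smul_mul (c : R) (f g : IncidenceAlgebra R (Fin n)) : (c • f) * g = c • (f * g) := by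
  ext a b hab
  rw [IncidenceAlgebra.mul_apply, IncidenceAlgebra.constSMul_apply,
    IncidenceAlgebra.mul_apply, smul_eq_mul, Finset.mul_sum]
  exact Finset.sum_congr rfl fun x _ => by
    rw [IncidenceAlgebra.constSMul_apply, smul_eq_mul, mul_assoc]

lemma mul_smul' (c : R) (f g : IncidenceAlgebra R (Fin n)) : f * (c • g) = c • (f * g) := by
  ext a b hab
  rw [IncidenceAlgebra.mul_apply, IncidenceAlgebra.constSMul_apply,
    IncidenceAlgebra.mul_apply, smul_eq_mul, Finset.mul_sum]
  exact Finset.sum_congr rfl fun x _ => by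
    rw [IncidenceAlgebra.constSMul_apply, smul_eq_mul]
    ring

lemma sgl_smul_cancel {i j : Fin n} (hij : i ≤ j) {c d : R}
    (h : c • (sgl i j : IncidenceAlgebra R (Fin n)) = d • sgl i j) : c = d := by
  have := congrFun (congrFun (congrArg (fun f : IncidenceAlgebra R (Fin n) => (f : Fin n → Fin n → R)) h) i) j
  simpa [IncidenceAlgebra.constSMul_apply, sgl_apply, hij] using this

lemma neg_mul_ia (f g : IncidenceAlgebra R (Fin n)) : -f * g = -(f * g) := neg_mul f g

lemma mul_neg_ia (f g : IncidenceAlgebra R (Fin n)) : f * -g = -(f * g) := mul_neg f g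

lemma apply_congr {f g : IncidenceAlgebra R (Fin n)} (h : f = g) (a b : Fin n) :
    f a b = g a b := by rw [h]

end PoissonFinChainAux

open PoissonFinChainAux in
/-- For `n > 0` and `P = Fin n` (so that `I(P,R)` is the algebra of upper
triangular `n × n` matrices over `R`), every Poisson structure on `I(P,R)` is standard: there is
`r ∈ R` with `{f,g} = r • [f,g]` for all `f, g`. -/
theorem poisson_structure_on_finChain_standard
    {R : Type*} [CommRing R] {n : ℕ} (hn : 0 < n)
    (bracket : IncidenceAlgebra R (Fin n) → IncidenceAlgebra R (Fin n) →
      IncidenceAlgebra R (Fin n))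
    (hadd_l : ∀ f g h, bracket (f + g) h = bracket f h + bracket g h)
    (hadd_r : ∀ f g h, bracket f (g + h) = bracket f g + bracket f h)
    (hsmul_l : ∀ (r : R) (f g), bracket (r • f) g = r • bracket f g)
    (hsmul_r : ∀ (r : R) (f g), bracket f (r • g) = r • bracket f g)
    (halt : ∀ f, bracket f f = 0)
    (hjacobi : ∀ f g h, bracket f (bracket g h) + bracket g (bracket h f) +
      bracket h (bracket f g) = 0)
    (hleibniz : ∀ f g h, bracket f (g * h) = bracket f g * h + g * bracket f h)
    :
    ∃ r : R, ∀ f g : IncidenceAlgebra R (Fin n), bracket f g = r • (f * g - g * f) := by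
  classical
  have hzero_l : ∀ g, bracket 0 g = 0 := fun g => by
    simpa using hsmul_l 0 0 g
  have hzero_r : ∀ f, bracket f 0 = 0 := fun f => by
    simpa using hsmul_r 0 f 0
  have hskew : ∀ f g, bracket g f = - bracket f g := by
    intro f g
    have h := halt (f + g)
    rw [hadd_l, hadd_r, hadd_r, halt, halt] at h
    simp only [zero_add, add_zero] at h
    rw [eq_neg_iff_add_eq_zero, add_comm]
    exact h
  have hleibniz_l : ∀ f g h, bracket (f * g) h = bracket f h * g + f * bracket g h := by
    intro f g h
    rw [hskew h (f * g), hleibniz, hskew h f, hskew h g]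
    rw [neg_add, neg_mul_ia, mul_neg_ia]
  have hsum_l : ∀ {ι : Type} (s : Finset ι) (F : ι → IncidenceAlgebra R (Fin n)) g,
      bracket (∑ i ∈ s, F i) g = ∑ i ∈ s, bracket (F i) g := by
    intro ι s F g
    induction s using Finset.cons_induction with
    | empty => simpa using hzero_l g
    | cons i s hi ih => rw [Finset.sum_cons, Finset.sum_cons, hadd_l, ih]
  have hsum_r : ∀ {ι : Type} (s : Finset ι) f (G : ι → IncidenceAlgebra R (Fin n)),
      bracket f (∑ i ∈ s, G i) = ∑ i ∈ s, bracket f (G i) := by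
    intro ι s f G
    induction s using Finset.cons_induction with
    | empty => simpa using hzero_r f
    | cons i s hi ih => rw [Finset.sum_cons, Finset.sum_cons, hadd_r, ih]
  have hone_l : ∀ f, bracket 1 f = 0 := by
    intro f
    have h := hleibniz_l 1 1 f
    rw [one_mul, one_mul, mul_one] at h
    exact (left_eq_add.mp h)
  -- Step 1 : brackets of diagonal idempotents vanish
  have aux1 : ∀ i j : Fin n, i ≠ j →
      sgl i i * bracket (sgl i i) (sgl j j) = 0 ∧
      bracket (sgl i i) (sgl j j) * sgl i i = 0 := by
    intro i j hij
    constructor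
    · have h := hleibniz (sgl i i) (sgl i i) (sgl j j)
      rw [sgl_mul_sgl_ne hij, hzero_r, halt, zero_mul, zero_add] at h
      exact h.symm
    · have h := hleibniz (sgl i i) (sgl j j) (sgl i i)
      rw [sgl_mul_sgl_ne hij.symm, hzero_r, halt, mul_zero, add_zero] at h
      exact h.symm
  have S1 : ∀ i j : Fin n, bracket (sgl i i) (sgl j j) = 0 := by
    intro i j
    rcases eq_or_ne i j with rfl | hij
    · exact halt _
    have h := hleibniz (sgl i i) (sgl j j) (sgl j j)
    rw [sgl_mul_sgl_eq le_rfl le_rfl] at h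
    have h1 : bracket (sgl j j) (sgl i i) * sgl j j = 0 := (aux1 j i hij.symm).2
    have h2 : sgl j j * bracket (sgl j j) (sgl i i) = 0 := (aux1 j i hij.symm).1
    rw [hskew (sgl i i) (sgl j j), neg_mul_ia, neg_eq_zero] at h1
    rw [hskew (sgl i i) (sgl j j), mul_neg_ia, neg_eq_zero] at h2
    rw [h1, h2, add_zero] at h
    exact h
  -- Step 2 : bracket of a diagonal with a matrix unit is a multiple of that unit
  have S2a : ∀ (k i j : Fin n), i ≤ j → bracket (sgl k k) (sgl i j) =
      (bracket (sgl k k) (sgl i j) i j : R) • sgl i j := by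
    intro k i j hij
    have hZ1 : bracket (sgl k k) (sgl i j) = sgl i i * bracket (sgl k k) (sgl i j) := by
      have h := hleibniz (sgl k k) (sgl i i) (sgl i j)
      rw [sgl_mul_sgl_eq le_rfl hij, S1, zero_mul, zero_add] at h
      exact h
    have hZ2 : bracket (sgl k k) (sgl i j) = bracket (sgl k k) (sgl i j) * sgl j j := by
      have h := hleibniz (sgl k k) (sgl i j) (sgl j j)
      rw [sgl_mul_sgl_eq hij le_rfl, S1, mul_zero, add_zero] at h
      exact h
    ext a b hab
    have h1 : bracket (sgl k k) (sgl i j) a b =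
        if a = i then bracket (sgl k k) (sgl i j) a b else 0 := by
      conv_lhs => rw [hZ1]
      rw [diag_mul_apply]
    have h2 : bracket (sgl k k) (sgl i j) a b =
        if b = j then bracket (sgl k k) (sgl i j) a b else 0 := by
      conv_lhs => rw [hZ2]
      rw [mul_diag_apply]
    rw [IncidenceAlgebra.constSMul_apply, sgl_apply, smul_eq_mul]
    rcases eq_or_ne a i with rfl | hai
    · rcases eq_or_ne b j with rfl | hbj
      · simp [hij]
      · rw [h2, if_neg hbj, if_neg (by tauto), mul_zero]
    · rw [h1, if_neg hai, if_neg (by tauto), mul_zero]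
  have S2b : ∀ (k i j : Fin n), i ≤ j → k ≠ i → k ≠ j →
      bracket (sgl k k) (sgl i j) = 0 := by
    intro k i j hij hki hkj
    have hz : bracket (sgl k k) (sgl i j) =
        bracket (sgl k k) (sgl i j) * sgl k k + sgl k k * bracket (sgl k k) (sgl i j) := by
      have h := hleibniz (sgl i j) (sgl k k) (sgl k k)
      rw [sgl_mul_sgl_eq le_rfl le_rfl, hskew (sgl k k) (sgl i j)] at h
      rw [neg_mul_ia, mul_neg_ia, ← neg_add] at h
      exact neg_injective h
    have hzij : bracket (sgl k k) (sgl i j) i j = 0 := by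
      have h := apply_congr hz i j
      rw [IncidenceAlgebra.add_apply, mul_diag_apply, diag_mul_apply,
        if_neg (Ne.symm hkj), if_neg (Ne.symm hki), add_zero] at h
      exact h
    rw [S2a k i j hij, hzij, zero_smul]
  -- scalars
  set A : Fin n → Fin n → R := fun i j => bracket (sgl i i) (sgl i j) i j with hA
  set Bt : Fin n → Fin n → R := fun i j => bracket (sgl j j) (sgl i j) i j with hBt
  have SA : ∀ i j : Fin n, i ≤ j → bracket (sgl i i) (sgl i j) = A i j • sgl i j := by
    intro i j h
    rw [hA]
    exact S2a i i j h
  have SB : ∀ i j : Fin n, i ≤ j → bracket (sgl j j) (sgl i j) = Bt i j • sgl i j := by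
    intro i j h
    rw [hBt]
    exact S2a j i j h
  -- F3 : the two scalars are opposite
  have F3 : ∀ i j : Fin n, i < j → Bt i j = - A i j := by
    intro i j hij
    have hsum0 : ∑ k : Fin n, bracket (sgl k k) (sgl i j) = 0 := by
      rw [← hsum_l, ← one_eq_sum_diag, hone_l]
    have hterm : ∀ k : Fin n, bracket (sgl k k) (sgl i j) =
        ((if k = i then A i j else 0) + (if k = j then Bt i j else 0)) • sgl i j := by
      intro k
      by_cases hki : k = i
      · subst hki
        rw [if_pos rfl, if_neg (ne_of_lt hij), add_zero]
        exact SA k j hij.le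
      · by_cases hkj : k = j
        · subst hkj
          rw [if_neg hki, if_pos rfl, zero_add]
          exact SB i k hij.le
        · rw [S2b k i j hij.le hki hkj, if_neg hki, if_neg hkj, add_zero, zero_smul]
    have hsum1 : ∑ k : Fin n, bracket (sgl k k) (sgl i j) = (A i j + Bt i j) • sgl i j := by
      rw [Finset.sum_congr rfl (fun k _ => hterm k), ← Finset.sum_smul]
      congr 1
      rw [Finset.sum_add_distrib, Finset.sum_ite_eq' Finset.univ i (fun _ => A i j),
        Finset.sum_ite_eq' Finset.univ j (fun _ => Bt i j)]
      simp
    have : (A i j + Bt i j) • (sgl i j : IncidenceAlgebra R (Fin n)) = (0 : R) • sgl i j := by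
      rw [← hsum1, hsum0, zero_smul]
    have h0 := sgl_smul_cancel hij.le this
    rw [eq_neg_iff_add_eq_zero, add_comm]
    exact h0
  -- F4a : left chaining
  have F4a : ∀ i k j : Fin n, i < k → k < j → A i j = A i k := by
    intro i k j hik hkj
    have h := hleibniz (sgl i i) (sgl i k) (sgl k j)
    rw [sgl_mul_sgl_eq hik.le hkj.le, SA i j (hik.trans hkj).le, SA i k hik.le,
      S2b i k j hkj.le (ne_of_lt hik) (ne_of_lt (hik.trans hkj)), mul_zero, add_zero,
      smul_mul, sgl_mul_sgl_eq hik.le hkj.le] at h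
    exact sgl_smul_cancel (hik.trans hkj).le h
  -- F4b : right chaining
  have F4b : ∀ i k j : Fin n, i < k → k < j → Bt i j = Bt k j := by
    intro i k j hik hkj
    have h := hleibniz (sgl j j) (sgl i k) (sgl k j)
    rw [sgl_mul_sgl_eq hik.le hkj.le, SB i j (hik.trans hkj).le, SB k j hkj.le,
      S2b j i k hik.le (ne_of_gt (hik.trans hkj)) (ne_of_gt hkj), zero_mul, zero_add,
      mul_smul', sgl_mul_sgl_eq hik.le hkj.le] at h
    exact sgl_smul_cancel (hik.trans hkj).le h
  -- the common scalar r
  obtain ⟨r, hr⟩ : ∃ r : R, ∀ i j : Fin n, i < j → A i j = r := by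
    by_cases h2 : 2 ≤ n
    · refine ⟨A ⟨0, by omega⟩ ⟨1, by omega⟩, ?_⟩
      have adj : ∀ a : ℕ, ∀ h : a + 1 < n,
          A ⟨a, by omega⟩ ⟨a + 1, h⟩ = A ⟨0, by omega⟩ ⟨1, by omega⟩ := by
        intro a
        induction a with
        | zero => intro h; rfl
        | succ a ih =>
          intro h
          have h1 : a + 1 < n := by omega
          have e01 : (⟨a, by omega⟩ : Fin n) < ⟨a + 1, h1⟩ := Fin.mk_lt_mk.mpr (by omega)
          have e12 : (⟨a + 1, h1⟩ : Fin n) < ⟨a + 1 + 1, h⟩ := Fin.mk_lt_mk.mpr (by omega)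
          have e02 : (⟨a, by omega⟩ : Fin n) < ⟨a + 1 + 1, h⟩ := Fin.mk_lt_mk.mpr (by omega)
          calc A ⟨a + 1, h1⟩ ⟨a + 1 + 1, h⟩
              = - Bt ⟨a + 1, h1⟩ ⟨a + 1 + 1, h⟩ := by rw [F3 _ _ e12, neg_neg]
            _ = - Bt ⟨a, by omega⟩ ⟨a + 1 + 1, h⟩ := by rw [F4b _ _ _ e01 e12]
            _ = A ⟨a, by omega⟩ ⟨a + 1 + 1, h⟩ := by rw [F3 _ _ e02, neg_neg]
            _ = A ⟨a, by omega⟩ ⟨a + 1, h1⟩ := F4a _ _ _ e01 e12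
            _ = A ⟨0, by omega⟩ ⟨1, by omega⟩ := ih h1
      intro i j hij
      have hij' : (i : ℕ) < (j : ℕ) := hij
      have hj : (i : ℕ) + 1 < n := by have := j.isLt; omega
      have key : A i ⟨(i : ℕ) + 1, hj⟩ = A ⟨0, by omega⟩ ⟨1, by omega⟩ := adj (i : ℕ) hj
      have hii1 : i < (⟨(i : ℕ) + 1, hj⟩ : Fin n) := by
        rw [Fin.lt_def]; simp
      rcases eq_or_lt_of_le (show (⟨(i : ℕ) + 1, hj⟩ : Fin n) ≤ j from by
        rw [Fin.le_def]; simpa using hij') with heq | hlt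
      · rw [← heq]
        exact key
      · rw [F4a i ⟨(i : ℕ) + 1, hj⟩ j hii1 hlt]
        exact key
    · exact ⟨0, fun i j hij => absurd (Fin.lt_def.mp hij) (by have := j.isLt; omega)⟩
  have hrB : ∀ i j : Fin n, i < j → Bt i j = -r := fun i j h => by rw [F3 i j h, hr i j h]
  -- the master diagonal formula
  have Ddiag : ∀ k i j : Fin n, i ≤ j → bracket (sgl k k) (sgl i j) =
      ((if k = i then r else 0) - (if k = j then r else 0)) • sgl i j := by
    intro k i j hij
    rcases hij.lt_or_eq with hlt | rfl
    · by_cases hki : k = i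
      · subst hki
        rw [if_pos rfl, if_neg (ne_of_lt hlt), sub_zero, SA k j hij, hr k j hlt]
      · by_cases hkj : k = j
        · subst hkj
          rw [if_neg hki, if_pos rfl, zero_sub, SB i k hij, hrB i k hlt, neg_smul]
        · rw [S2b k i j hij hki hkj, if_neg hki, if_neg hkj, sub_self, zero_smul]
    · rw [S1, sub_self, zero_smul]
  have Dskew : ∀ k i j : Fin n, i ≤ j → bracket (sgl i j) (sgl k k) =
      (-((if k = i then r else 0) - (if k = j then r else 0))) • sgl i j := by
    intro k i j hij
    rw [hskew (sgl k k) (sgl i j), Ddiag k i j hij, ← neg_smul]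
  -- products of matrix units
  have hP : ∀ i j k l : Fin n, i ≤ j → k ≤ l →
      (sgl i j : IncidenceAlgebra R (Fin n)) * sgl k l =
        if j = k then sgl i l else 0 := by
    intro i j k l hij hkl
    split_ifs with h
    · subst h
      exact sgl_mul_sgl_eq hij hkl
    · exact sgl_mul_sgl_ne h
  -- the master formula on matrix units
  have S4 : ∀ i j k l : Fin n, i ≤ j → k ≤ l →
      bracket (sgl i j) (sgl k l) = r • (sgl i j * sgl k l - sgl k l * sgl i j) := by
    have Scomm : ∀ i j k l : Fin n, i ≤ j → k ≤ l →
        bracket (sgl i i) (sgl k l) = r • (sgl i i * sgl k l - sgl k l * sgl i i) := by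
      intro i j k l hij hkl
      rw [Ddiag i k l hkl, hP i i k l le_rfl hkl, hP k l i i hkl le_rfl]
      by_cases hik : i = k
      · subst hik
        by_cases hil : i = l
        · subst hil
          simp
        · have hli : ¬ l = i := fun h => hil h.symm
          simp [hil, hli]
      · have hki : ¬ k = i := fun h => hik h.symm
        by_cases hil : i = l
        · simp [hik, ← hil, hki]
        · have hli : ¬ l = i := fun h => hil h.symm
          simp [hik, hil, hki, hli]
    intro i j k l hij hkl
    rcases hij.lt_or_eq with hij' | rfl
    swap
    · exact Scomm i i k l le_rfl hkl
    rcases hkl.lt_or_eq with hkl' | rfl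
    swap
    · rw [hskew (sgl k k) (sgl i j), Scomm k k i j le_rfl hij'.le, ← smul_neg, neg_sub]
    -- main case : i < j and k < l
    by_cases hik : i = k ∧ j = l
    · obtain ⟨rfl, rfl⟩ := hik
      rw [halt, sub_self, smul_zero]
    have hC : bracket (sgl i j) (sgl k l) =
        sgl k k * bracket (sgl i j) (sgl k l) + (if j = k then r else 0) • sgl i l := by
      have h := hleibniz (sgl i j) (sgl k k) (sgl k l)
      rw [sgl_mul_sgl_eq le_rfl hkl, Dskew k i j hij'.le, smul_mul, hP i j k l hij'.le hkl] at h
      have hT : (-((if k = i then r else 0) - (if k = j then r else 0))) •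
          (if j = k then (sgl i l : IncidenceAlgebra R (Fin n)) else 0) =
          (if j = k then r else 0) • sgl i l := by
        by_cases hjk : j = k
        · have hki : ¬ k = i := fun h => hij'.ne ((hjk.trans h).symm)
          simp [hjk, hki]
        · simp [hjk]
      rw [hT, add_comm] at h
      exact h
    have hD : bracket (sgl i j) (sgl k l) =
        bracket (sgl i j) (sgl k l) * sgl l l + (if l = i then -r else 0) • sgl k j := by
      have h := hleibniz (sgl i j) (sgl k l) (sgl l l)
      rw [sgl_mul_sgl_eq hkl le_rfl, Dskew l i j hij'.le, mul_smul', hP k l i j hkl hij'.le] at h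
      have hT : (-((if l = i then r else 0) - (if l = j then r else 0))) •
          (if l = i then (sgl k j : IncidenceAlgebra R (Fin n)) else 0) =
          (if l = i then -r else 0) • sgl k j := by
        by_cases hli : l = i
        · simp [hli, hij'.ne]
        · simp [hli]
      rw [hT] at h
      exact h
    have hE : bracket (sgl i j) (sgl k l) =
        sgl i i * bracket (sgl i j) (sgl k l) + (if l = i then -r else 0) • sgl k j := by
      have h := hleibniz_l (sgl i i) (sgl i j) (sgl k l)
      rw [sgl_mul_sgl_eq le_rfl hij'.le, Ddiag i k l hkl, smul_mul, hP k l i j hkl hij'.le] at h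
      have hT : (((if i = k then r else 0) - (if i = l then r else 0))) •
          (if l = i then (sgl k j : IncidenceAlgebra R (Fin n)) else 0) =
          (if l = i then -r else 0) • sgl k j := by
        by_cases hli : l = i
        · have hik' : ¬ i = k := fun h => hkl'.ne' (hli.trans h)
          simp [hli, hik']
        · simp [hli]
      rw [hT, add_comm] at h
      exact h
    have hF : bracket (sgl i j) (sgl k l) =
        bracket (sgl i j) (sgl k l) * sgl j j + (if j = k then r else 0) • sgl i l := by
      have h := hleibniz_l (sgl i j) (sgl j j) (sgl k l)
      rw [sgl_mul_sgl_eq hij'.le le_rfl, Ddiag j k l hkl, mul_smul', hP i j k l hij'.le hkl] at h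
      have hT : (((if j = k then r else 0) - (if j = l then r else 0))) •
          (if j = k then (sgl i l : IncidenceAlgebra R (Fin n)) else 0) =
          (if j = k then r else 0) • sgl i l := by
        by_cases hjk : j = k
        · simp [hjk, hkl'.ne]
        · simp [hjk]
      rw [hT] at h
      exact h
    have hgoal : bracket (sgl i j) (sgl k l) =
        (if j = k then r else 0) • sgl i l + (if l = i then -r else 0) • sgl k j := by
      ext a b hab
      have hT1ab : ((if j = k then r else 0) • (sgl i l : IncidenceAlgebra R (Fin n))) a b =
          (if j = k then r else 0) * (if a = i ∧ b = l ∧ i ≤ l then 1 else 0) := by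
        rw [IncidenceAlgebra.constSMul_apply, sgl_apply, smul_eq_mul]
      have hT2ab : ((if l = i then -r else 0) • (sgl k j : IncidenceAlgebra R (Fin n))) a b =
          (if l = i then -r else 0) * (if a = k ∧ b = j ∧ k ≤ j then 1 else 0) := by
        rw [IncidenceAlgebra.constSMul_apply, sgl_apply, smul_eq_mul]
      rw [IncidenceAlgebra.add_apply]
      have hCab := apply_congr hC a b
      have hDab := apply_congr hD a b
      have hEab := apply_congr hE a b
      have hFab := apply_congr hF a b
      rw [IncidenceAlgebra.add_apply, diag_mul_apply] at hCab
      rw [IncidenceAlgebra.add_apply, mul_diag_apply] at hDab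
      rw [IncidenceAlgebra.add_apply, diag_mul_apply] at hEab
      rw [IncidenceAlgebra.add_apply, mul_diag_apply] at hFab
      by_cases hak : a = k
      · by_cases hbj : b = j
        · by_cases hki : k = i
          · have hjl : j ≠ l := fun h => hik ⟨hki.symm, h⟩
            have hbl : b ≠ l := by rw [hbj]; exact hjl
            rw [hDab, if_neg hbl, zero_add, hT1ab, if_neg (show ¬(a = i ∧ b = l ∧ i ≤ l) from fun hc => hbl hc.2.1), mul_zero,
              zero_add]
          · have hai : a ≠ i := fun h => hki (hak.symm.trans h)
            rw [hEab, if_neg hai, zero_add, hT1ab, if_neg (show ¬(a = i ∧ b = l ∧ i ≤ l) from fun hc => hai hc.1), mul_zero,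
              zero_add]
        · rw [hFab, if_neg hbj, zero_add, hT2ab, if_neg (show ¬(a = k ∧ b = j ∧ k ≤ j) from fun hc => hbj hc.2.1), mul_zero,
            add_zero]
      · rw [hCab, if_neg hak, zero_add, hT2ab, if_neg (show ¬(a = k ∧ b = j ∧ k ≤ j) from fun hc => hak hc.1), mul_zero,
          add_zero]
    rw [hgoal, hP i j k l hij'.le hkl, hP k l i j hkl hij'.le]
    by_cases hjk : j = k
    · have hli : l ≠ i := fun h => lt_irrefl i (((hij'.trans_eq hjk).trans hkl').trans_eq h)
      simp [hjk, hli]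
    · by_cases hli : l = i
      · simp [hjk, hli]
      · simp [hjk, hli]
  -- assembly by bilinearity
  refine ⟨r, fun f g => ?_⟩
  have step1 : bracket f g = ∑ p : Fin n × Fin n, ∑ q : Fin n × Fin n,
      (f p.1 p.2 * g q.1 q.2) • bracket (sgl p.1 p.2) (sgl q.1 q.2) := by
    conv_lhs => rw [sum_sgl f]
    rw [hsum_l]
    refine Finset.sum_congr rfl fun p _ => ?_
    rw [hsmul_l]
    conv_lhs => rw [sum_sgl g]
    rw [hsum_r, Finset.smul_sum]
    refine Finset.sum_congr rfl fun q _ => ?_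
    rw [hsmul_r, smul_smul]
  have step2 : bracket f g = ∑ p : Fin n × Fin n, ∑ q : Fin n × Fin n,
      (f p.1 p.2 * g q.1 q.2) •
        (r • (sgl p.1 p.2 * sgl q.1 q.2 - sgl q.1 q.2 * sgl p.1 p.2)) := by
    rw [step1]
    refine Finset.sum_congr rfl fun p _ => Finset.sum_congr rfl fun q _ => ?_
    by_cases hp : p.1 ≤ p.2
    · by_cases hq : q.1 ≤ q.2
      · rw [S4 p.1 p.2 q.1 q.2 hp hq]
      · rw [IncidenceAlgebra.apply_eq_zero_of_not_le hq g, mul_zero, zero_smul, zero_smul]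
    · rw [IncidenceAlgebra.apply_eq_zero_of_not_le hp f, zero_mul, zero_smul, zero_smul]
  have hfg : f * g = ∑ p : Fin n × Fin n, ∑ q : Fin n × Fin n,
      (f p.1 p.2 * g q.1 q.2) • (sgl p.1 p.2 * sgl q.1 q.2) := by
    conv_lhs => rw [sum_sgl f, sum_sgl g]
    rw [Finset.sum_mul]
    refine Finset.sum_congr rfl fun p _ => ?_
    rw [Finset.mul_sum]
    refine Finset.sum_congr rfl fun q _ => ?_
    rw [smul_mul, mul_smul', smul_smul]
  have hgf : g * f = ∑ p : Fin n × Fin n, ∑ q : Fin n × Fin n,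
      (f p.1 p.2 * g q.1 q.2) • (sgl q.1 q.2 * sgl p.1 p.2) := by
    conv_lhs => rw [sum_sgl g, sum_sgl f]
    rw [Finset.sum_mul]
    have hq : ∀ q : Fin n × Fin n,
        (g q.1 q.2 • (sgl q.1 q.2 : IncidenceAlgebra R (Fin n))) *
            (∑ p : Fin n × Fin n, f p.1 p.2 • sgl p.1 p.2) =
          ∑ p : Fin n × Fin n, (f p.1 p.2 * g q.1 q.2) • (sgl q.1 q.2 * sgl p.1 p.2) := by
      intro q
      rw [Finset.mul_sum]
      refine Finset.sum_congr rfl fun p _ => ?_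
      rw [smul_mul, mul_smul', smul_smul, mul_comm]
    exact (Finset.sum_congr rfl fun q _ => hq q).trans Finset.sum_comm
  rw [step2, hfg, hgf]
  have hsub : (∑ p : Fin n × Fin n, ∑ q : Fin n × Fin n,
        (f p.1 p.2 * g q.1 q.2) • ((sgl p.1 p.2 : IncidenceAlgebra R (Fin n)) * sgl q.1 q.2)) -
      (∑ p : Fin n × Fin n, ∑ q : Fin n × Fin n,
        (f p.1 p.2 * g q.1 q.2) • (sgl q.1 q.2 * sgl p.1 p.2)) =
      ∑ p : Fin n × Fin n, ∑ q : Fin n × Fin n,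
        (f p.1 p.2 * g q.1 q.2) • (sgl p.1 p.2 * sgl q.1 q.2 - sgl q.1 q.2 * sgl p.1 p.2) := by
    rw [← Finset.sum_sub_distrib]
    refine Finset.sum_congr rfl fun p _ => ?_
    rw [← Finset.sum_sub_distrib]
    refine Finset.sum_congr rfl fun q _ => ?_
    rw [← smul_sub]
  rw [hsub, Finset.smul_sum]
  refine Finset.sum_congr rfl fun p _ => ?_
  rw [Finset.smul_sum]
  refine Finset.sum_congr rfl fun q _ => ?_
  rw [smul_smul, mul_comm, ← smul_smul]
end
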